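/- arXiv:2007.13057 — 2 statements merged into one kernel-verified Lean document; each statement's English description precedes it below -/
import Mathlib

section
/- Let A ∈ ℍ^{m×k}, B ∈ ℍ^{o×n}, C ∈ ℍ^{m×p}, D ∈ ℍ^{r×n}, F ∈ ℍ^{m×l}, G ∈ ℍ^{s×n}, E ∈ ℍ^{m×n} be quaternion matrices, and set A₀ = R_A C, B₀ = D L_B, C₀ = R_A F, D₀ = G L_B, E₀ = R_A E L_B, M = R_{A₀} C₀, N = D₀ L_{B₀}, S = C₀ L_M. The equation A X + Y B + C Z D + F W G = E has a solution (X, Y, Z, W) with X ∈ ℍ^{k×n}, Y ∈ ℍ^{m×o}, Z ∈ ℍ^{p×r}, W ∈ ℍ^{l×s} if and only if R_M R_{A₀} E₀ = 0, E₀ L_{B₀} L_N = 0, R_{A₀} E₀ L_{D₀} = 0 and R_{C₀} E₀ L_{B₀} = 0. -/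
open Matrix

/-- The four Penrose equations over the quaternions: `X` is a Moore–Penrose
inverse of `A`. -/
def IsMP {m n : Type*} [Fintype m] [Fintype n]
    (A : Matrix m n (Quaternion ℝ)) (X : Matrix n m (Quaternion ℝ)) : Prop :=
  A * X * A = A ∧ X * A * X = X ∧ (A * X)ᴴ = A * X ∧ (X * A)ᴴ = X * A

/-!
Multiplying by `R_A` on the left and by `L_B` on the right removes `A X + Y B`, and conversely
`A X + Y B = T` is solved by `X = A† T`, `Y = R_A T B†` as soon as `R_A T L_B = 0`. So the equation
is solvable iff `A₀ Z B₀ + C₀ W D₀ = E₀` is, and the four conditions are plainly necessary for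
the latter. For sufficiency, `A₀ Z B₀ = T` is solvable once `R_{A₀} T = 0 = T L_{B₀}`, and
`W = M† E₀ D₀† + L_M C₀† E₀ N†` makes `T = E₀ - C₀ W D₀` satisfy both. The Hermitian Penrose
equations enter only through `M† A₀ A₀† = 0` and `B₀† B₀ N† = 0`, which hold because
`M† = M† M†ᴴ Mᴴ` and `Mᴴ A₀ A₀† = C₀ᴴ R_{A₀} A₀ A₀† = 0`.
-/

open scoped Quaternion

section Residual

variable {R : Type*} [Ring R] {m n k o p r l s : Type*}

theorem one_sub_mul_eq_zero_iff [Fintype m] [DecidableEq m] {P : Matrix m m R}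
    {T : Matrix m n R} : (1 - P) * T = 0 ↔ P * T = T := by
  rw [Matrix.sub_mul, Matrix.one_mul, sub_eq_zero, eq_comm]

theorem mul_one_sub_eq_zero_iff [Fintype n] [DecidableEq n] {P : Matrix n n R}
    {T : Matrix m n R} : T * (1 - P) = 0 ↔ T * P = T := by
  rw [Matrix.mul_sub, Matrix.mul_one, sub_eq_zero, eq_comm]

variable [Fintype m] [Fintype k] {A : Matrix m k R} {Ad : Matrix k m R}

theorem one_sub_mul_mul_self_eq_zero [DecidableEq m] (h : A * Ad * A = A) :
    (1 - A * Ad) * A = 0 :=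
  one_sub_mul_eq_zero_iff.2 h

theorem self_mul_one_sub_mul_eq_zero [DecidableEq k] (h : A * Ad * A = A) :
    A * (1 - Ad * A) = 0 :=
  mul_one_sub_eq_zero_iff.2 (by rw [← Matrix.mul_assoc, h])

theorem one_sub_mul_mul_self_mul_eq_zero [DecidableEq m] (h : A * Ad * A = A)
    (X : Matrix k n R) : (1 - A * Ad) * (A * X) = 0 := by
  rw [← Matrix.mul_assoc, one_sub_mul_mul_self_eq_zero h, Matrix.zero_mul]

theorem mul_self_mul_one_sub_mul_eq_zero [DecidableEq k] (h : A * Ad * A = A)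
    (X : Matrix n m R) : X * (A * (1 - Ad * A)) = 0 := by
  rw [self_mul_one_sub_mul_eq_zero h, Matrix.mul_zero]

variable [Fintype n] [Fintype o] [Fintype p] [Fintype r] [Fintype l] [Fintype s]
  [DecidableEq m] [DecidableEq n] {B : Matrix o n R} {Bd : Matrix n o R}

theorem exists_mul_add_mul_eq_of_residual_eq_zero {T : Matrix m n R}
    (hT : (1 - A * Ad) * T * (1 - Bd * B) = 0) :
    ∃ (X : Matrix k n R) (Y : Matrix m o R), A * X + Y * B = T := by
  refine ⟨Ad * T, (1 - A * Ad) * T * Bd, ?_⟩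
  simp only [Matrix.mul_sub, Matrix.sub_mul, Matrix.mul_one, Matrix.one_mul,
    Matrix.mul_assoc] at hT ⊢
  linear_combination (norm := abel) -hT

theorem exists_mul_mul_eq_of_residual_eq_zero {T : Matrix m n R}
    (hl : (1 - A * Ad) * T = 0) (hr : T * (1 - Bd * B) = 0) :
    ∃ Z : Matrix k o R, A * Z * B = T := by
  refine ⟨Ad * T * Bd, ?_⟩
  rw [one_sub_mul_eq_zero_iff] at hl
  rw [mul_one_sub_eq_zero_iff] at hr
  simp only [← Matrix.mul_assoc, hl]
  rw [Matrix.mul_assoc, hr]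

theorem exists_four_term_iff_exists_two_sided (hA : A * Ad * A = A) (hB : B * Bd * B = B)
    (C : Matrix m p R) (D : Matrix r n R) (F : Matrix m l R) (G : Matrix s n R)
    (E : Matrix m n R) :
    (∃ (X : Matrix k n R) (Y : Matrix m o R) (Z : Matrix p r R) (W : Matrix l s R),
        A * X + Y * B + C * Z * D + F * W * G = E) ↔
      ∃ (Z : Matrix p r R) (W : Matrix l s R),
        (1 - A * Ad) * C * Z * (D * (1 - Bd * B)) + (1 - A * Ad) * F * W * (G * (1 - Bd * B)) =
          (1 - A * Ad) * E * (1 - Bd * B) := by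
  constructor
  · rintro ⟨X, Y, Z, W, rfl⟩
    refine ⟨Z, W, ?_⟩
    simp only [Matrix.mul_add, Matrix.add_mul, Matrix.mul_assoc,
      one_sub_mul_mul_self_mul_eq_zero hA, mul_self_mul_one_sub_mul_eq_zero hB,
      Matrix.mul_zero, zero_add]
  · rintro ⟨Z, W, h⟩
    obtain ⟨X, Y, hXY⟩ := exists_mul_add_mul_eq_of_residual_eq_zero
      (A := A) (Ad := Ad) (B := B) (Bd := Bd) (T := E - C * Z * D - F * W * G) (by
        simp only [Matrix.mul_sub, Matrix.sub_mul, Matrix.mul_assoc] at h ⊢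
        linear_combination (norm := abel) -h)
    exact ⟨X, Y, Z, W, by rw [hXY]; abel⟩

end Residual

section TwoSided
variable {R : Type*} [Ring R] {m n p r l s : Type*}
  [Fintype m] [Fintype n] [Fintype p] [Fintype r] [Fintype l] [Fintype s]
  [DecidableEq m] [DecidableEq n]

theorem two_sided_conditions_of_eq {A₀ : Matrix m p R} {A₀d : Matrix p m R}
    {B₀ : Matrix r n R} {B₀d : Matrix n r R} {C₀ : Matrix m l R} {C₀d : Matrix l m R}
    {D₀ : Matrix s n R} {D₀d : Matrix n s R} {M : Matrix m l R} {Md : Matrix l m R}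
    {N : Matrix s n R} {Nd : Matrix n s R}
    (hA₀ : A₀ * A₀d * A₀ = A₀) (hB₀ : B₀ * B₀d * B₀ = B₀) (hC₀ : C₀ * C₀d * C₀ = C₀)
    (hD₀ : D₀ * D₀d * D₀ = D₀) (hM : M = (1 - A₀ * A₀d) * C₀) (hN : N = D₀ * (1 - B₀d * B₀))
    (hMd : M * Md * M = M) (hNd : N * Nd * N = N)
    {Z : Matrix p r R} {W : Matrix l s R} {E₀ : Matrix m n R}
    (h : A₀ * Z * B₀ + C₀ * W * D₀ = E₀) :
    (1 - M * Md) * (1 - A₀ * A₀d) * E₀ = 0 ∧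
      E₀ * (1 - B₀d * B₀) * (1 - Nd * N) = 0 ∧
      (1 - A₀ * A₀d) * E₀ * (1 - D₀d * D₀) = 0 ∧
      (1 - C₀ * C₀d) * E₀ * (1 - B₀d * B₀) = 0 := by
  subst h
  have hM' (X : Matrix l n R) : (1 - A₀ * A₀d) * (C₀ * X) = M * X := by
    rw [hM, Matrix.mul_assoc]
  have hN' (X : Matrix n n R) : D₀ * ((1 - B₀d * B₀) * X) = N * X := by
    rw [hN, Matrix.mul_assoc]
  refine ⟨?_, ?_, ?_, ?_⟩ <;>
    simp only [Matrix.mul_add, Matrix.add_mul, Matrix.mul_assoc, hM', hN',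
      one_sub_mul_mul_self_mul_eq_zero hA₀, one_sub_mul_mul_self_mul_eq_zero hC₀,
      one_sub_mul_mul_self_mul_eq_zero hMd, mul_self_mul_one_sub_mul_eq_zero hB₀,
      mul_self_mul_one_sub_mul_eq_zero hD₀, mul_self_mul_one_sub_mul_eq_zero hNd,
      Matrix.mul_zero, add_zero, zero_add]

end TwoSided

namespace IsMP

variable {m n o : Type*} [Fintype m] [Fintype n] {A : Matrix m n ℍ} {Ad : Matrix n m ℍ}

theorem conjTranspose_one_sub_mul_pinv [DecidableEq m] (h : IsMP A Ad) :
    (1 - A * Ad)ᴴ = 1 - A * Ad := by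
  rw [conjTranspose_sub, conjTranspose_one, h.2.2.1]

theorem conjTranspose_one_sub_pinv_mul [DecidableEq n] (h : IsMP A Ad) :
    (1 - Ad * A)ᴴ = 1 - Ad * A := by
  rw [conjTranspose_sub, conjTranspose_one, h.2.2.2]

theorem pinv_mul_eq_zero (h : IsMP A Ad) {X : Matrix m o ℍ} (hX : Aᴴ * X = 0) :
    Ad * X = 0 :=
  calc Ad * X = Ad * (A * Ad)ᴴ * X := by rw [h.2.2.1, ← Matrix.mul_assoc, h.2.1]
    _ = Ad * Adᴴ * (Aᴴ * X) := by rw [conjTranspose_mul]; simp only [Matrix.mul_assoc]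
    _ = 0 := by rw [hX, Matrix.mul_zero]

theorem mul_pinv_eq_zero (h : IsMP A Ad) {X : Matrix o n ℍ} (hX : X * Aᴴ = 0) :
    X * Ad = 0 :=
  calc X * Ad = X * (Ad * A)ᴴ * Ad := by rw [h.2.2.2, Matrix.mul_assoc X, h.2.1]
    _ = X * Aᴴ * (Adᴴ * Ad) := by rw [conjTranspose_mul]; simp only [Matrix.mul_assoc]
    _ = 0 := by rw [hX, Matrix.zero_mul]

theorem pinv_mul_proj_eq_zero [DecidableEq m] {l : Type*} [Fintype l] (hA : IsMP A Ad)
    {C : Matrix m l ℍ} {Md : Matrix l m ℍ} (hM : IsMP ((1 - A * Ad) * C) Md) :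
    Md * (A * Ad) = 0 :=
  hM.pinv_mul_eq_zero <| by
    rw [conjTranspose_mul, hA.conjTranspose_one_sub_mul_pinv, Matrix.mul_assoc,
      one_sub_mul_mul_self_mul_eq_zero hA.1, Matrix.mul_zero]

theorem proj_mul_pinv_eq_zero [DecidableEq n] {s : Type*} [Fintype s] (hA : IsMP A Ad)
    {D : Matrix s n ℍ} {Nd : Matrix n s ℍ} (hN : IsMP (D * (1 - Ad * A)) Nd) :
    Ad * A * Nd = 0 :=
  hN.mul_pinv_eq_zero <| by
    rw [conjTranspose_mul, hA.conjTranspose_one_sub_pinv_mul, ← Matrix.mul_assoc,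
      Matrix.mul_assoc Ad, self_mul_one_sub_mul_eq_zero hA.1, Matrix.mul_zero, Matrix.zero_mul]

end IsMP

section Sufficiency

variable {m n p r l s : Type*} [Fintype m] [Fintype n] [Fintype p] [Fintype r] [Fintype l]
  [Fintype s] [DecidableEq m] [DecidableEq n] [DecidableEq l]
  {A₀ : Matrix m p ℍ} {A₀d : Matrix p m ℍ} {B₀ : Matrix r n ℍ} {B₀d : Matrix n r ℍ}
  {C₀ : Matrix m l ℍ} {C₀d : Matrix l m ℍ} {D₀ : Matrix s n ℍ} {D₀d : Matrix n s ℍ}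
  {M : Matrix m l ℍ} {Md : Matrix l m ℍ} {N : Matrix s n ℍ} {Nd : Matrix n s ℍ}
  {E₀ : Matrix m n ℍ}

theorem one_sub_mul_pinv_mul_sub_eq_zero (hA₀d : IsMP A₀ A₀d)
    (hM : M = (1 - A₀ * A₀d) * C₀) (hMd : IsMP M Md)
    (h1 : (1 - M * Md) * (1 - A₀ * A₀d) * E₀ = 0)
    (h3 : (1 - A₀ * A₀d) * E₀ * (1 - D₀d * D₀) = 0) (V : Matrix l s ℍ) :
    (1 - A₀ * A₀d) * (E₀ - C₀ * (Md * E₀ * D₀d + (1 - Md * M) * V) * D₀) = 0 := by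
  have hMd' : IsMP ((1 - A₀ * A₀d) * C₀) Md := hM ▸ hMd
  have hMP : M * Md * (A₀ * A₀d) = 0 := by
    rw [Matrix.mul_assoc, hA₀d.pinv_mul_proj_eq_zero hMd', Matrix.mul_zero]
  have hRE : (1 - A₀ * A₀d) * E₀ = M * Md * E₀ := by
    rw [Matrix.mul_assoc, one_sub_mul_eq_zero_iff] at h1
    rw [← h1, Matrix.sub_mul (1 : Matrix m m ℍ), Matrix.one_mul, Matrix.mul_sub,
      ← Matrix.mul_assoc _ (A₀ * A₀d), hMP, Matrix.zero_mul, sub_zero]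
  have hMW : M * (Md * E₀ * D₀d + (1 - Md * M) * V) = M * Md * E₀ * D₀d := by
    rw [Matrix.mul_add, ← Matrix.mul_assoc M (1 - Md * M), self_mul_one_sub_mul_eq_zero hMd.1,
      Matrix.zero_mul, add_zero]
    simp only [Matrix.mul_assoc]
  calc (1 - A₀ * A₀d) * (E₀ - C₀ * (Md * E₀ * D₀d + (1 - Md * M) * V) * D₀)
      = (1 - A₀ * A₀d) * E₀ - M * Md * E₀ * D₀d * D₀ := by
        rw [Matrix.mul_sub, ← hMW, hM]
        simp only [Matrix.mul_assoc]
    _ = (1 - A₀ * A₀d) * E₀ * (1 - D₀d * D₀) := by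
        rw [← hRE, Matrix.mul_sub, Matrix.mul_one, Matrix.mul_assoc _ D₀d]
    _ = 0 := h3

theorem sub_mul_one_sub_pinv_mul_eq_zero (hA₀d : IsMP A₀ A₀d) (hB₀d : IsMP B₀ B₀d)
    (hM : M = (1 - A₀ * A₀d) * C₀) (hN : N = D₀ * (1 - B₀d * B₀))
    (hMd : IsMP M Md) (hNd : IsMP N Nd)
    (h2 : E₀ * (1 - B₀d * B₀) * (1 - Nd * N) = 0)
    (h3 : (1 - A₀ * A₀d) * E₀ * (1 - D₀d * D₀) = 0)
    (h4 : (1 - C₀ * C₀d) * E₀ * (1 - B₀d * B₀) = 0) :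
    (E₀ - C₀ * (Md * E₀ * D₀d + (1 - Md * M) * (C₀d * E₀ * Nd)) * D₀) * (1 - B₀d * B₀) = 0 := by
  have hMd' : IsMP ((1 - A₀ * A₀d) * C₀) Md := hM ▸ hMd
  have hNd' : IsMP (D₀ * (1 - B₀d * B₀)) Nd := hN ▸ hNd
  have hMdR : Md * (1 - A₀ * A₀d) = Md := by
    rw [Matrix.mul_sub, Matrix.mul_one, hA₀d.pinv_mul_proj_eq_zero hMd', sub_zero]
  have hEL : E₀ * (1 - B₀d * B₀) = E₀ * (Nd * N) := by
    rw [mul_one_sub_eq_zero_iff] at h2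
    rw [← h2, Matrix.mul_assoc, Matrix.sub_mul (1 : Matrix n n ℍ), Matrix.one_mul,
      ← Matrix.mul_assoc (B₀d * B₀), hB₀d.proj_mul_pinv_eq_zero hNd', Matrix.zero_mul, sub_zero]
  have hCEL : C₀ * (C₀d * (E₀ * (1 - B₀d * B₀))) = E₀ * (1 - B₀d * B₀) := by
    rw [Matrix.mul_assoc, one_sub_mul_eq_zero_iff] at h4
    rw [← Matrix.mul_assoc, h4]
  have hMdE : Md * E₀ * (1 - D₀d * D₀) = 0 := by
    rw [← hMdR]
    simp only [Matrix.mul_assoc] at h3 ⊢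
    rw [h3, Matrix.mul_zero]
  have hMdDD (X : Matrix n n ℍ) : Md * (E₀ * (D₀d * (D₀ * X))) = Md * (E₀ * X) := by
    rw [mul_one_sub_eq_zero_iff] at hMdE
    simp only [← Matrix.mul_assoc] at hMdE ⊢
    rw [hMdE]
  have hMdM : Md * M = Md * C₀ := by rw [hM, ← Matrix.mul_assoc, hMdR]
  have hWN : (Md * E₀ * D₀d + (1 - Md * M) * (C₀d * E₀ * Nd)) * N =
      C₀d * (E₀ * (Nd * N)) :=
    calc _ = Md * (E₀ * (D₀d * N)) + C₀d * (E₀ * (Nd * N)) -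
          Md * (C₀ * (C₀d * (E₀ * (Nd * N)))) := by
          rw [hMdM]
          simp only [Matrix.add_mul, Matrix.sub_mul, Matrix.one_mul, Matrix.mul_assoc]
          abel
      _ = C₀d * (E₀ * (Nd * N)) := by
          rw [hN, hMdDD, ← hN, ← hEL, hCEL]
          abel
  calc _ = E₀ * (1 - B₀d * B₀) -
        C₀ * ((Md * E₀ * D₀d + (1 - Md * M) * (C₀d * E₀ * Nd)) * N) := by
        rw [hN]
        simp only [Matrix.sub_mul, Matrix.mul_assoc]
    _ = 0 := by rw [hWN, ← hEL, hCEL, sub_self]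

theorem exists_two_sided_of_conditions (hA₀d : IsMP A₀ A₀d) (hB₀d : IsMP B₀ B₀d)
    (hM : M = (1 - A₀ * A₀d) * C₀) (hN : N = D₀ * (1 - B₀d * B₀))
    (hMd : IsMP M Md) (hNd : IsMP N Nd)
    (h1 : (1 - M * Md) * (1 - A₀ * A₀d) * E₀ = 0)
    (h2 : E₀ * (1 - B₀d * B₀) * (1 - Nd * N) = 0)
    (h3 : (1 - A₀ * A₀d) * E₀ * (1 - D₀d * D₀) = 0)
    (h4 : (1 - C₀ * C₀d) * E₀ * (1 - B₀d * B₀) = 0) :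
    ∃ (Z : Matrix p r ℍ) (W : Matrix l s ℍ), A₀ * Z * B₀ + C₀ * W * D₀ = E₀ := by
  obtain ⟨Z, hZ⟩ := exists_mul_mul_eq_of_residual_eq_zero
    (one_sub_mul_pinv_mul_sub_eq_zero hA₀d hM hMd h1 h3 (C₀d * E₀ * Nd))
    (sub_mul_one_sub_pinv_mul_eq_zero hA₀d hB₀d hM hN hMd hNd h2 h3 h4)
  exact ⟨Z, _, by rw [hZ, sub_add_cancel]⟩

end Sufficiency

theorem four_term_solvable_iff_general {m k o n p r l s : Type*}
    [Fintype m] [Fintype k] [Fintype o] [Fintype n] [Fintype p] [Fintype r]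
    [Fintype l] [Fintype s]
    [DecidableEq m] [DecidableEq n]
    [DecidableEq l]
    (A : Matrix m k (Quaternion ℝ)) (B : Matrix o n (Quaternion ℝ))
    (C : Matrix m p (Quaternion ℝ)) (D : Matrix r n (Quaternion ℝ))
    (F : Matrix m l (Quaternion ℝ)) (G : Matrix s n (Quaternion ℝ))
    (E : Matrix m n (Quaternion ℝ))
    (Ad : Matrix k m (Quaternion ℝ)) (Bd : Matrix n o (Quaternion ℝ))
    (hA : IsMP A Ad) (hB : IsMP B Bd)
    (A₀ : Matrix m p (Quaternion ℝ)) (B₀ : Matrix r n (Quaternion ℝ))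
    (C₀ : Matrix m l (Quaternion ℝ)) (D₀ : Matrix s n (Quaternion ℝ))
    (E₀ : Matrix m n (Quaternion ℝ))
    (hA₀ : A₀ = (1 - A * Ad) * C) (hB₀ : B₀ = D * (1 - Bd * B))
    (hC₀ : C₀ = (1 - A * Ad) * F) (hD₀ : D₀ = G * (1 - Bd * B))
    (hE₀ : E₀ = (1 - A * Ad) * E * (1 - Bd * B))
    (A₀d : Matrix p m (Quaternion ℝ)) (B₀d : Matrix n r (Quaternion ℝ))
    (C₀d : Matrix l m (Quaternion ℝ)) (D₀d : Matrix n s (Quaternion ℝ))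
    (hA₀d : IsMP A₀ A₀d) (hB₀d : IsMP B₀ B₀d)
    (hC₀d : IsMP C₀ C₀d) (hD₀d : IsMP D₀ D₀d)
    (M : Matrix m l (Quaternion ℝ)) (N : Matrix s n (Quaternion ℝ))
    (hM : M = (1 - A₀ * A₀d) * C₀) (hN : N = D₀ * (1 - B₀d * B₀))
    (Md : Matrix l m (Quaternion ℝ)) (Nd : Matrix n s (Quaternion ℝ))
    (hMd : IsMP M Md) (hNd : IsMP N Nd) :
    (∃ (X : Matrix k n (Quaternion ℝ)) (Y : Matrix m o (Quaternion ℝ))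
        (Z : Matrix p r (Quaternion ℝ)) (W : Matrix l s (Quaternion ℝ)),
        A * X + Y * B + C * Z * D + F * W * G = E) ↔
      (1 - M * Md) * (1 - A₀ * A₀d) * E₀ = 0 ∧
      E₀ * (1 - B₀d * B₀) * (1 - Nd * N) = 0 ∧
      (1 - A₀ * A₀d) * E₀ * (1 - D₀d * D₀) = 0 ∧
      (1 - C₀ * C₀d) * E₀ * (1 - B₀d * B₀) = 0 := by
  rw [exists_four_term_iff_exists_two_sided hA.1 hB.1, ← hA₀, ← hB₀, ← hC₀, ← hD₀, ← hE₀]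
  constructor
  · rintro ⟨Z, W, h⟩
    exact two_sided_conditions_of_eq hA₀d.1 hB₀d.1 hC₀d.1 hD₀d.1 hM hN hMd.1 hNd.1 h
  · rintro ⟨h1, h2, h3, h4⟩
    exact exists_two_sided_of_conditions hA₀d hB₀d hM hN hMd hNd h1 h2 h3 h4

/-- Solvability criterion for `A X + Y B + C Z D + F W G = E` in terms of the derived
matrices `A₀ = R_A C`, `B₀ = D L_B`, `C₀ = R_A F`, `D₀ = G L_B`, `E₀ = R_A E L_B`,
`M = R_{A₀} C₀`, `N = D₀ L_{B₀}`, `S = C₀ L_M`. -/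
theorem four_term_solvable_iff {m k o n p r l s : Type*}
    [Fintype m] [Fintype k] [Fintype o] [Fintype n] [Fintype p] [Fintype r]
    [Fintype l] [Fintype s]
    [DecidableEq m] [DecidableEq n] [DecidableEq p] [DecidableEq r]
    [DecidableEq l] [DecidableEq s]
    (A : Matrix m k (Quaternion ℝ)) (B : Matrix o n (Quaternion ℝ))
    (C : Matrix m p (Quaternion ℝ)) (D : Matrix r n (Quaternion ℝ))
    (F : Matrix m l (Quaternion ℝ)) (G : Matrix s n (Quaternion ℝ))
    (E : Matrix m n (Quaternion ℝ))
    (Ad : Matrix k m (Quaternion ℝ)) (Bd : Matrix n o (Quaternion ℝ))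
    (hA : IsMP A Ad) (hB : IsMP B Bd)
    (A₀ : Matrix m p (Quaternion ℝ)) (B₀ : Matrix r n (Quaternion ℝ))
    (C₀ : Matrix m l (Quaternion ℝ)) (D₀ : Matrix s n (Quaternion ℝ))
    (E₀ : Matrix m n (Quaternion ℝ))
    (hA₀ : A₀ = (1 - A * Ad) * C) (hB₀ : B₀ = D * (1 - Bd * B))
    (hC₀ : C₀ = (1 - A * Ad) * F) (hD₀ : D₀ = G * (1 - Bd * B))
    (hE₀ : E₀ = (1 - A * Ad) * E * (1 - Bd * B))
    (A₀d : Matrix p m (Quaternion ℝ)) (B₀d : Matrix n r (Quaternion ℝ))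
    (C₀d : Matrix l m (Quaternion ℝ)) (D₀d : Matrix n s (Quaternion ℝ))
    (hA₀d : IsMP A₀ A₀d) (hB₀d : IsMP B₀ B₀d)
    (hC₀d : IsMP C₀ C₀d) (hD₀d : IsMP D₀ D₀d)
    (M : Matrix m l (Quaternion ℝ)) (N : Matrix s n (Quaternion ℝ))
    (hM : M = (1 - A₀ * A₀d) * C₀) (hN : N = D₀ * (1 - B₀d * B₀))
    (Md : Matrix l m (Quaternion ℝ)) (Nd : Matrix n s (Quaternion ℝ))
    (hMd : IsMP M Md) (hNd : IsMP N Nd)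
    (S : Matrix m l (Quaternion ℝ)) (hS : S = C₀ * (1 - Md * M)) :
    (∃ (X : Matrix k n (Quaternion ℝ)) (Y : Matrix m o (Quaternion ℝ))
        (Z : Matrix p r (Quaternion ℝ)) (W : Matrix l s (Quaternion ℝ)),
        A * X + Y * B + C * Z * D + F * W * G = E) ↔
      (1 - M * Md) * (1 - A₀ * A₀d) * E₀ = 0 ∧
      E₀ * (1 - B₀d * B₀) * (1 - Nd * N) = 0 ∧
      (1 - A₀ * A₀d) * E₀ * (1 - D₀d * D₀) = 0 ∧
      (1 - C₀ * C₀d) * E₀ * (1 - B₀d * B₀) = 0 :=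
  four_term_solvable_iff_general A B C D F G E Ad Bd hA hB A₀ B₀ C₀ D₀ E₀ hA₀ hB₀ hC₀ hD₀ hE₀ A₀d
    B₀d C₀d D₀d hA₀d hB₀d hC₀d hD₀d M N hM hN Md Nd hMd hNd
end

section
/- Let A ∈ ℍ^{m×k}, B ∈ ℍ^{o×n}, C ∈ ℍ^{m×p}, D ∈ ℍ^{r×n}, F ∈ ℍ^{m×l}, G ∈ ℍ^{s×n}, E ∈ ℍ^{m×n} be quaternion matrices, set A₀ = R_A C, B₀ = D L_B, C₀ = R_A F, D₀ = G L_B, E₀ = R_A E L_B, M = R_{A₀} C₀, N = D₀ L_{B₀}, S = C₀ L_M, and assume R_M R_{A₀} E₀ = 0, E₀ L_{B₀} L_N = 0, R_{A₀} E₀ L_{D₀} = 0 and R_{C₀} E₀ L_{B₀} = 0. Then for arbitrary quaternion matrices T₁, …, T₈ of the appropriate sizes, the tuple (X, Y, Z, W) defined by Z = A₀† E₀ B₀† − A₀† C₀ M† E₀ B₀† − A₀† S C₀† E₀ N† D₀ B₀† − A₀† S T₄ R_N D₀ B₀† + L_{A₀} T₅ + T₆ R_{B₀}, W = M† E₀ D₀†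 + S† S C₀† E₀ N† + L_M L_S T₇ + L_M T₄ R_N + T₈ R_{D₀}, X = A† (E − C Z D − F W G) − T₁ B + L_A T₂, and Y = R_A (E − C Z D − F W G) B† + A T₁ + T₃ R_B satisfies A X + Y B + C Z D + F W G = E. -/
open Matrix

/-!
Applying `R_A (·) L_B` to `E - C Z D - F W G` gives `E₀ - A₀ Z B₀ - C₀ W D₀`, so it suffices that
`(Z, W)` solves `A₀ Z B₀ + C₀ W D₀ = E₀`: then `X, Y` are the general solution of `A X + Y B = Q`
for a `Q` with `R_A Q L_B = 0`.

For the two-term equation the Penrose equations give `M† A₀ = 0`, `B₀ N† = 0` and `M S† = 0`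
(a Moore–Penrose inverse `X` of `P` kills whatever `Pᴴ` kills). Put
`K = E₀ - C₀ M† E₀ - S C₀† E₀ N† D₀`. The conditions `R_M R_{A₀} E₀ = 0`, resp.
`E₀ L_{B₀} L_N = 0` and `R_{C₀} E₀ L_{B₀} = 0`, give `R_{A₀} K = 0` and `K L_{B₀} = 0`, so the
`T`-free part of `Z` contributes `A₀ A₀† K B₀† B₀ = K`; by `R_{A₀} E₀ L_{D₀} = 0` the `T`-free part
of `W` contributes `C₀ M† E₀ + S C₀† E₀ N† D₀ = E₀ - K`. The `T₄`-terms of `Z` and `W` add up to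
`S T₄ R_N D₀ L_{B₀} = S T₄ R_N N = 0`, and the other `T`-terms vanish one by one.
-/

open Quaternion

namespace IsMP

section

variable {m n k : Type*} [Fintype m] [Fintype n] {A : Matrix m n ℍ} {X : Matrix n m ℍ}

theorem mul_eq_zero_of_conjTranspose_mul_eq_zero (h : IsMP A X) {P : Matrix m k ℍ}
    (hP : Aᴴ * P = 0) : X * P = 0 := by
  have hX : X = X * Xᴴ * Aᴴ := by
    conv_lhs => rw [← h.2.1, Matrix.mul_assoc, ← h.2.2.1, conjTranspose_mul]
    rw [Matrix.mul_assoc]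
  rw [hX, Matrix.mul_assoc, hP, Matrix.mul_zero]

theorem mul_eq_zero_of_mul_conjTranspose_eq_zero (h : IsMP A X) {P : Matrix k n ℍ}
    (hP : P * Aᴴ = 0) : P * X = 0 := by
  have hX : X = Aᴴ * Xᴴ * X := by
    conv_lhs => rw [← h.2.1, ← h.2.2.2, conjTranspose_mul]
  rw [hX, ← Matrix.mul_assoc, ← Matrix.mul_assoc, hP, Matrix.zero_mul, Matrix.zero_mul]

end

variable {m n : Type*} [Fintype m] [Fintype n] {A : Matrix m n ℍ} {X : Matrix n m ℍ}

theorem mul_one_sub_mul [DecidableEq n] (h : IsMP A X) : A * (1 - X * A) = 0 := by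
  rw [Matrix.mul_sub, Matrix.mul_one, ← Matrix.mul_assoc, h.1, sub_self]

theorem one_sub_mul_mul [DecidableEq m] (h : IsMP A X) : (1 - A * X) * A = 0 := by
  rw [Matrix.sub_mul, Matrix.one_mul, h.1, sub_self]

theorem conjTranspose_one_sub_mul [DecidableEq m] (h : IsMP A X) : (1 - A * X)ᴴ = 1 - A * X := by
  rw [conjTranspose_sub, conjTranspose_one, h.2.2.1]

theorem conjTranspose_one_sub_mul' [DecidableEq n] (h : IsMP A X) : (1 - X * A)ᴴ = 1 - X * A := by
  rw [conjTranspose_sub, conjTranspose_one, h.2.2.2]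

end IsMP

section Projections

variable {m n p s : Type*} [Fintype m] [Fintype n] [Fintype p] [Fintype s]

theorem pinv_mul_eq_zero_of_isMP_one_sub_mul_mul [DecidableEq m] {A : Matrix m p ℍ}
    {Ad : Matrix p m ℍ} {C : Matrix m s ℍ} {Md : Matrix s m ℍ} (hA : IsMP A Ad)
    (hM : IsMP ((1 - A * Ad) * C) Md) : Md * A = 0 :=
  hM.mul_eq_zero_of_conjTranspose_mul_eq_zero <| by
    rw [conjTranspose_mul, hA.conjTranspose_one_sub_mul, Matrix.mul_assoc, hA.one_sub_mul_mul,
      Matrix.mul_zero]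

theorem mul_pinv_eq_zero_of_isMP_mul_one_sub_mul [DecidableEq n] {B : Matrix p n ℍ}
    {Bd : Matrix n p ℍ} {D : Matrix s n ℍ} {Nd : Matrix n s ℍ} (hB : IsMP B Bd)
    (hN : IsMP (D * (1 - Bd * B)) Nd) : B * Nd = 0 :=
  hN.mul_eq_zero_of_mul_conjTranspose_eq_zero <| by
    rw [conjTranspose_mul, hB.conjTranspose_one_sub_mul', ← Matrix.mul_assoc, hB.mul_one_sub_mul,
      Matrix.zero_mul]

theorem pinv_mul_one_sub_mul_eq_self [DecidableEq m] {A : Matrix m p ℍ}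
    {Ad : Matrix p m ℍ} {C : Matrix m s ℍ} {Md : Matrix s m ℍ} (hA : IsMP A Ad)
    (hM : IsMP ((1 - A * Ad) * C) Md) : Md * (1 - A * Ad) = Md := by
  rw [Matrix.mul_sub, Matrix.mul_one, ← Matrix.mul_assoc,
    pinv_mul_eq_zero_of_isMP_one_sub_mul_mul hA hM, Matrix.zero_mul, sub_zero]

theorem one_sub_mul_mul_pinv_eq_self [DecidableEq n] {B : Matrix p n ℍ}
    {Bd : Matrix n p ℍ} {D : Matrix s n ℍ} {Nd : Matrix n s ℍ} (hB : IsMP B Bd)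
    (hN : IsMP (D * (1 - Bd * B)) Nd) : (1 - Bd * B) * Nd = Nd := by
  rw [Matrix.sub_mul, Matrix.one_mul, Matrix.mul_assoc,
    mul_pinv_eq_zero_of_isMP_mul_one_sub_mul hB hN, Matrix.mul_zero, sub_zero]

theorem mul_pinv_mul_eq_of_isMP_mul_one_sub_mul [DecidableEq n] {B : Matrix p n ℍ}
    {Bd : Matrix n p ℍ} {D : Matrix s n ℍ} {Nd : Matrix n s ℍ} (hB : IsMP B Bd)
    (hN : IsMP (D * (1 - Bd * B)) Nd) : D * Nd * (D * (1 - Bd * B)) = D * (1 - Bd * B) := by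
  have hNNN := hN.1
  rwa [Matrix.mul_assoc D, one_sub_mul_mul_pinv_eq_self hB hN] at hNNN

end Projections

section TwoTerm

variable {m n p r l s : Type*} [Fintype m] [Fintype n] [Fintype p] [Fintype r] [Fintype l]
  [Fintype s] {A : Matrix m p ℍ} {B : Matrix r n ℍ} {C : Matrix m l ℍ} {D : Matrix s n ℍ}
  {E : Matrix m n ℍ} {Ad : Matrix p m ℍ} {Bd : Matrix n r ℍ} {Cd : Matrix l m ℍ}
  {Dd : Matrix n s ℍ} {M : Matrix m l ℍ} {N : Matrix s n ℍ} {Md : Matrix l m ℍ}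
  {Nd : Matrix n s ℍ} {S : Matrix m l ℍ} {Sd : Matrix l m ℍ}

theorem one_sub_mul_mul_eq_zero [DecidableEq m] [DecidableEq l] (hM : M = (1 - A * Ad) * C)
    (hMd : IsMP M Md) (hS : S = C * (1 - Md * M)) : (1 - A * Ad) * S = 0 := by
  rw [hS, ← Matrix.mul_assoc, ← hM, hMd.mul_one_sub_mul]

theorem one_sub_mul_mul_residual_eq_zero [DecidableEq m] [DecidableEq l] (hA : IsMP A Ad)
    (hM : M = (1 - A * Ad) * C) (hMd : IsMP M Md) (hS : S = C * (1 - Md * M))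
    (h1 : (1 - M * Md) * (1 - A * Ad) * E = 0) :
    (1 - A * Ad) * (E - C * Md * E - S * Cd * E * Nd * D) = 0 := by
  have hMdR : Md * (1 - A * Ad) = Md := pinv_mul_one_sub_mul_eq_self hA (hM ▸ hMd)
  calc (1 - A * Ad) * (E - C * Md * E - S * Cd * E * Nd * D)
      = (1 - A * Ad) * E - M * (Md * ((1 - A * Ad) * E))
          - (1 - A * Ad) * S * (Cd * E * Nd * D) := by
        rw [← Matrix.mul_assoc Md, hMdR, hM]
        simp only [Matrix.mul_sub, Matrix.mul_assoc]
    _ = (1 - M * Md) * (1 - A * Ad) * E := by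
        rw [one_sub_mul_mul_eq_zero hM hMd hS, Matrix.zero_mul, sub_zero]
        simp only [Matrix.sub_mul, Matrix.mul_sub, Matrix.one_mul, Matrix.mul_assoc]
        abel
    _ = 0 := h1

theorem residual_mul_one_sub_mul_eq_zero [DecidableEq m] [DecidableEq n] [DecidableEq l]
    (hA : IsMP A Ad) (hB : IsMP B Bd) (hM : M = (1 - A * Ad) * C) (hN : N = D * (1 - Bd * B))
    (hMd : IsMP M Md) (hNd : IsMP N Nd) (hS : S = C * (1 - Md * M))
    (h2 : E * (1 - Bd * B) * (1 - Nd * N) = 0) (h4 : (1 - C * Cd) * E * (1 - Bd * B) = 0) :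
    (E - C * Md * E - S * Cd * E * Nd * D) * (1 - Bd * B) = 0 := by
  have hENN : E * (Nd * N) = E * (1 - Bd * B) := by
    rw [Matrix.mul_sub, Matrix.mul_one, Matrix.mul_assoc E, ← Matrix.mul_assoc _ Nd,
      one_sub_mul_mul_pinv_eq_self hB (hN ▸ hNd), sub_eq_zero] at h2
    exact h2.symm
  have hCC : C * (Cd * (E * (1 - Bd * B))) = E * (1 - Bd * B) := by
    rw [Matrix.sub_mul, Matrix.sub_mul, Matrix.one_mul, sub_eq_zero] at h4
    simpa only [Matrix.mul_assoc] using h4.symm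
  have hMdM : Md * M = Md * C := by
    rw [hM, ← Matrix.mul_assoc, pinv_mul_one_sub_mul_eq_self hA (hM ▸ hMd)]
  calc (E - C * Md * E - S * Cd * E * Nd * D) * (1 - Bd * B)
      = E * (1 - Bd * B) - C * Md * (E * (1 - Bd * B))
          - (C - C * (Md * M)) * Cd * (E * (Nd * N)) := by
        rw [hN, hS, Matrix.mul_sub C, Matrix.mul_one]
        simp only [Matrix.sub_mul, Matrix.mul_assoc]
    _ = (1 - C * Md) * (E * (1 - Bd * B) - C * (Cd * (E * (1 - Bd * B)))) := by
        rw [hENN, hMdM]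
        simp only [Matrix.sub_mul, Matrix.mul_sub, Matrix.one_mul, Matrix.mul_assoc]
        abel
    _ = 0 := by rw [hCC, sub_self, Matrix.mul_zero]

theorem two_term_particular_solution [DecidableEq m] [DecidableEq n] [DecidableEq l]
    (hA : IsMP A Ad) (hB : IsMP B Bd) (hM : M = (1 - A * Ad) * C) (hN : N = D * (1 - Bd * B))
    (hMd : IsMP M Md) (hNd : IsMP N Nd) (hS : S = C * (1 - Md * M)) (hSd : IsMP S Sd)
    (h1 : (1 - M * Md) * (1 - A * Ad) * E = 0) (h2 : E * (1 - Bd * B) * (1 - Nd * N) = 0)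
    (h3 : (1 - A * Ad) * E * (1 - Dd * D) = 0) (h4 : (1 - C * Cd) * E * (1 - Bd * B) = 0) :
    A * (Ad * E * Bd - Ad * C * Md * E * Bd - Ad * S * Cd * E * Nd * D * Bd) * B
      + C * (Md * E * Dd + Sd * S * Cd * E * Nd) * D = E := by
  set K := E - C * Md * E - S * Cd * E * Nd * D with hK
  have hAK : A * Ad * K = K := by
    have hRK := one_sub_mul_mul_residual_eq_zero (Cd := Cd) (Nd := Nd) (D := D) hA hM hMd hS h1
    rwa [Matrix.sub_mul, Matrix.one_mul, sub_eq_zero, eq_comm] at hRK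
  have hKB : K * (Bd * B) = K := by
    have hKL := residual_mul_one_sub_mul_eq_zero hA hB hM hN hMd hNd hS h2 h4
    rwa [Matrix.mul_sub, Matrix.mul_one, sub_eq_zero, eq_comm] at hKL
  have hMdE : Md * E * (Dd * D) = Md * E := by
    have hMdR := congrArg (Md * ·) h3
    simp only [← Matrix.mul_assoc, pinv_mul_one_sub_mul_eq_self hA (hM ▸ hMd)] at hMdR
    rwa [Matrix.mul_sub, Matrix.mul_one, Matrix.mul_zero, sub_eq_zero, eq_comm] at hMdR
  have hCSd : C * Sd * S = S := hS ▸ mul_pinv_mul_eq_of_isMP_mul_one_sub_mul hMd (hS ▸ hSd)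
  calc A * (Ad * E * Bd - Ad * C * Md * E * Bd - Ad * S * Cd * E * Nd * D * Bd) * B
        + C * (Md * E * Dd + Sd * S * Cd * E * Nd) * D
      = A * Ad * K * (Bd * B) + (C * (Md * E * (Dd * D)) + C * Sd * S * Cd * E * Nd * D) := by
        simp only [hK, Matrix.mul_sub, Matrix.sub_mul, Matrix.mul_add, Matrix.add_mul,
          Matrix.mul_assoc]
    _ = E := by
        rw [hAK, hKB, hMdE, hCSd, hK, Matrix.mul_assoc C Md E]
        abel

theorem two_term_homogeneous_solution [DecidableEq m] [DecidableEq n] [DecidableEq p]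
    [DecidableEq r] [DecidableEq l] [DecidableEq s] (hA : IsMP A Ad) (hB : IsMP B Bd)
    (hD : IsMP D Dd) (hM : M = (1 - A * Ad) * C) (hN : N = D * (1 - Bd * B)) (hMd : IsMP M Md)
    (hNd : IsMP N Nd) (hS : S = C * (1 - Md * M)) (hSd : IsMP S Sd) (T₄ : Matrix l s ℍ)
    (T₅ T₆ : Matrix p r ℍ) (T₇ T₈ : Matrix l s ℍ) :
    A * ((1 - Ad * A) * T₅ + T₆ * (1 - B * Bd) - Ad * S * T₄ * (1 - N * Nd) * D * Bd) * B
      + C * ((1 - Md * M) * (1 - Sd * S) * T₇ + (1 - Md * M) * T₄ * (1 - N * Nd)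
        + T₈ * (1 - D * Dd)) * D = 0 := by
  have hAS : A * Ad * S = S := by
    have hRS := one_sub_mul_mul_eq_zero hM hMd hS
    rwa [Matrix.sub_mul, Matrix.one_mul, sub_eq_zero, eq_comm] at hRS
  have hAZB :
      A * ((1 - Ad * A) * T₅ + T₆ * (1 - B * Bd) - Ad * S * T₄ * (1 - N * Nd) * D * Bd) * B
        = -(S * T₄ * (1 - N * Nd) * D * (Bd * B)) := by
    rw [Matrix.mul_sub, Matrix.mul_add, Matrix.sub_mul, Matrix.add_mul, ← Matrix.mul_assoc A,
      hA.mul_one_sub_mul, Matrix.mul_assoc A (T₆ * _), Matrix.mul_assoc T₆, hB.one_sub_mul_mul]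
    simp only [← Matrix.mul_assoc, hAS, Matrix.zero_mul, Matrix.mul_zero, zero_add, zero_sub]
  have hCWD : C * ((1 - Md * M) * (1 - Sd * S) * T₇ + (1 - Md * M) * T₄ * (1 - N * Nd)
        + T₈ * (1 - D * Dd)) * D = S * T₄ * (1 - N * Nd) * D := by
    rw [Matrix.mul_add, Matrix.mul_add, Matrix.add_mul, Matrix.add_mul,
      Matrix.mul_assoc C (T₈ * _), Matrix.mul_assoc T₈, hD.one_sub_mul_mul]
    simp only [← Matrix.mul_assoc, ← hS, hSd.mul_one_sub_mul, Matrix.zero_mul, Matrix.mul_zero,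
      zero_add, add_zero]
  rw [hAZB, hCWD]
  calc -(S * T₄ * (1 - N * Nd) * D * (Bd * B)) + S * T₄ * (1 - N * Nd) * D
      = S * T₄ * (1 - N * Nd) * (D * (1 - Bd * B)) := by
        simp only [Matrix.mul_sub, Matrix.mul_one, Matrix.mul_assoc]
        abel
    _ = 0 := by rw [← hN, Matrix.mul_assoc, hNd.one_sub_mul_mul, Matrix.mul_zero]

theorem two_term_solution [DecidableEq m] [DecidableEq n] [DecidableEq p] [DecidableEq r]
    [DecidableEq l] [DecidableEq s] (hA : IsMP A Ad) (hB : IsMP B Bd) (hD : IsMP D Dd)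
    (hM : M = (1 - A * Ad) * C) (hN : N = D * (1 - Bd * B)) (hMd : IsMP M Md) (hNd : IsMP N Nd)
    (hS : S = C * (1 - Md * M)) (hSd : IsMP S Sd) (h1 : (1 - M * Md) * (1 - A * Ad) * E = 0)
    (h2 : E * (1 - Bd * B) * (1 - Nd * N) = 0) (h3 : (1 - A * Ad) * E * (1 - Dd * D) = 0)
    (h4 : (1 - C * Cd) * E * (1 - Bd * B) = 0) (T₄ : Matrix l s ℍ) (T₅ T₆ : Matrix p r ℍ)
    (T₇ T₈ : Matrix l s ℍ) :
    A * (Ad * E * Bd - Ad * C * Md * E * Bd - Ad * S * Cd * E * Nd * D * Bd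
        - Ad * S * T₄ * (1 - N * Nd) * D * Bd + (1 - Ad * A) * T₅ + T₆ * (1 - B * Bd)) * B
      + C * (Md * E * Dd + Sd * S * Cd * E * Nd + (1 - Md * M) * (1 - Sd * S) * T₇
        + (1 - Md * M) * T₄ * (1 - N * Nd) + T₈ * (1 - D * Dd)) * D = E := by
  have hsum := congrArg₂ (· + ·)
    (two_term_particular_solution hA hB hM hN hMd hNd hS hSd h1 h2 h3 h4)
    (two_term_homogeneous_solution hA hB hD hM hN hMd hNd hS hSd T₄ T₅ T₆ T₇ T₈)
  rw [add_zero] at hsum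
  convert hsum using 1
  simp only [Matrix.mul_add, Matrix.add_mul, Matrix.mul_sub, Matrix.sub_mul]
  abel

end TwoTerm

theorem two_sided_solution {m n k o : Type*} [Fintype m] [Fintype n] [Fintype k] [Fintype o]
    [DecidableEq m] [DecidableEq n] [DecidableEq k] [DecidableEq o] {A : Matrix m k ℍ}
    {B : Matrix o n ℍ} {Ad : Matrix k m ℍ} {Bd : Matrix n o ℍ} {Q : Matrix m n ℍ}
    (hA : IsMP A Ad) (hB : IsMP B Bd) (hQ : (1 - A * Ad) * Q * (1 - Bd * B) = 0)
    (T₁ : Matrix k o ℍ) (T₂ : Matrix k n ℍ) (T₃ : Matrix m o ℍ) :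
    A * (Ad * Q - T₁ * B + (1 - Ad * A) * T₂)
      + ((1 - A * Ad) * Q * Bd + A * T₁ + T₃ * (1 - B * Bd)) * B = Q := by
  calc A * (Ad * Q - T₁ * B + (1 - Ad * A) * T₂)
        + ((1 - A * Ad) * Q * Bd + A * T₁ + T₃ * (1 - B * Bd)) * B
      = Q - (1 - A * Ad) * Q * (1 - Bd * B) := by
        rw [Matrix.mul_add A, ← Matrix.mul_assoc A (1 - Ad * A), hA.mul_one_sub_mul,
          Matrix.add_mul _ (T₃ * _), Matrix.mul_assoc T₃, hB.one_sub_mul_mul]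
        simp only [Matrix.mul_sub, Matrix.sub_mul, Matrix.add_mul, Matrix.one_mul,
          Matrix.mul_one, Matrix.mul_assoc, Matrix.zero_mul, Matrix.mul_zero]
        abel
    _ = Q := by rw [hQ, sub_zero]

theorem four_term_solution_formula_general {m k o n p r l s : Type*}
    [Fintype m] [Fintype k] [Fintype o] [Fintype n] [Fintype p] [Fintype r]
    [Fintype l] [Fintype s]
    [DecidableEq m] [DecidableEq n] [DecidableEq k] [DecidableEq o]
    [DecidableEq p] [DecidableEq r] [DecidableEq l] [DecidableEq s]
    (A : Matrix m k (Quaternion ℝ)) (B : Matrix o n (Quaternion ℝ))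
    (C : Matrix m p (Quaternion ℝ)) (D : Matrix r n (Quaternion ℝ))
    (F : Matrix m l (Quaternion ℝ)) (G : Matrix s n (Quaternion ℝ))
    (E : Matrix m n (Quaternion ℝ))
    (Ad : Matrix k m (Quaternion ℝ)) (Bd : Matrix n o (Quaternion ℝ))
    (hA : IsMP A Ad) (hB : IsMP B Bd)
    (A₀ : Matrix m p (Quaternion ℝ)) (B₀ : Matrix r n (Quaternion ℝ))
    (C₀ : Matrix m l (Quaternion ℝ)) (D₀ : Matrix s n (Quaternion ℝ))
    (E₀ : Matrix m n (Quaternion ℝ))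
    (hA₀ : A₀ = (1 - A * Ad) * C) (hB₀ : B₀ = D * (1 - Bd * B))
    (hC₀ : C₀ = (1 - A * Ad) * F) (hD₀ : D₀ = G * (1 - Bd * B))
    (hE₀ : E₀ = (1 - A * Ad) * E * (1 - Bd * B))
    (A₀d : Matrix p m (Quaternion ℝ)) (B₀d : Matrix n r (Quaternion ℝ))
    (C₀d : Matrix l m (Quaternion ℝ)) (D₀d : Matrix n s (Quaternion ℝ))
    (hA₀d : IsMP A₀ A₀d) (hB₀d : IsMP B₀ B₀d)
    (hD₀d : IsMP D₀ D₀d)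
    (M : Matrix m l (Quaternion ℝ)) (N : Matrix s n (Quaternion ℝ))
    (hM : M = (1 - A₀ * A₀d) * C₀) (hN : N = D₀ * (1 - B₀d * B₀))
    (Md : Matrix l m (Quaternion ℝ)) (Nd : Matrix n s (Quaternion ℝ))
    (hMd : IsMP M Md) (hNd : IsMP N Nd)
    (S : Matrix m l (Quaternion ℝ)) (hS : S = C₀ * (1 - Md * M))
    (Sd : Matrix l m (Quaternion ℝ)) (hSd : IsMP S Sd)
    (h1 : (1 - M * Md) * (1 - A₀ * A₀d) * E₀ = 0)
    (h2 : E₀ * (1 - B₀d * B₀) * (1 - Nd * N) = 0)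
    (h3 : (1 - A₀ * A₀d) * E₀ * (1 - D₀d * D₀) = 0)
    (h4 : (1 - C₀ * C₀d) * E₀ * (1 - B₀d * B₀) = 0) :
    ∀ (T₁ : Matrix k o (Quaternion ℝ)) (T₂ : Matrix k n (Quaternion ℝ))
      (T₃ : Matrix m o (Quaternion ℝ)) (T₄ : Matrix l s (Quaternion ℝ))
      (T₅ T₆ : Matrix p r (Quaternion ℝ)) (T₇ T₈ : Matrix l s (Quaternion ℝ))
      (X : Matrix k n (Quaternion ℝ)) (Y : Matrix m o (Quaternion ℝ))
      (Z : Matrix p r (Quaternion ℝ)) (W : Matrix l s (Quaternion ℝ)),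
      Z = A₀d * E₀ * B₀d - A₀d * C₀ * Md * E₀ * B₀d
          - A₀d * S * C₀d * E₀ * Nd * D₀ * B₀d
          - A₀d * S * T₄ * (1 - N * Nd) * D₀ * B₀d
          + (1 - A₀d * A₀) * T₅ + T₆ * (1 - B₀ * B₀d) →
      W = Md * E₀ * D₀d + Sd * S * C₀d * E₀ * Nd
          + (1 - Md * M) * (1 - Sd * S) * T₇
          + (1 - Md * M) * T₄ * (1 - N * Nd) + T₈ * (1 - D₀ * D₀d) →
      X = Ad * (E - C * Z * D - F * W * G) - T₁ * B + (1 - Ad * A) * T₂ →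
      Y = (1 - A * Ad) * (E - C * Z * D - F * W * G) * Bd + A * T₁ + T₃ * (1 - B * Bd) →
      A * X + Y * B + C * Z * D + F * W * G = E := by
  intro T₁ T₂ T₃ T₄ T₅ T₆ T₇ T₈ X Y Z W hZ hW hX hY
  have hZW : A₀ * Z * B₀ + C₀ * W * D₀ = E₀ := by
    rw [hZ, hW]
    exact two_term_solution hA₀d hB₀d hD₀d hM hN hMd hNd hS hSd h1 h2 h3 h4 T₄ T₅ T₆ T₇ T₈
  have hQ : (1 - A * Ad) * (E - C * Z * D - F * W * G) * (1 - Bd * B) = 0 := by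
    calc (1 - A * Ad) * (E - C * Z * D - F * W * G) * (1 - Bd * B)
        = E₀ - (A₀ * Z * B₀ + C₀ * W * D₀) := by
          rw [hA₀, hB₀, hC₀, hD₀, hE₀]
          simp only [Matrix.mul_sub, Matrix.sub_mul, Matrix.mul_assoc]
          abel
      _ = 0 := by rw [hZW, sub_self]
  rw [hX, hY, two_sided_solution hA hB hQ]
  abel

/-- Under the consistency conditions, for arbitrary `T₁, …, T₈` the displayed tuple
`(X, Y, Z, W)` solves `A X + Y B + C Z D + F W G = E`. -/
theorem four_term_solution_formula {m k o n p r l s : Type*}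
    [Fintype m] [Fintype k] [Fintype o] [Fintype n] [Fintype p] [Fintype r]
    [Fintype l] [Fintype s]
    [DecidableEq m] [DecidableEq n] [DecidableEq k] [DecidableEq o]
    [DecidableEq p] [DecidableEq r] [DecidableEq l] [DecidableEq s]
    (A : Matrix m k (Quaternion ℝ)) (B : Matrix o n (Quaternion ℝ))
    (C : Matrix m p (Quaternion ℝ)) (D : Matrix r n (Quaternion ℝ))
    (F : Matrix m l (Quaternion ℝ)) (G : Matrix s n (Quaternion ℝ))
    (E : Matrix m n (Quaternion ℝ))
    (Ad : Matrix k m (Quaternion ℝ)) (Bd : Matrix n o (Quaternion ℝ))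
    (hA : IsMP A Ad) (hB : IsMP B Bd)
    (A₀ : Matrix m p (Quaternion ℝ)) (B₀ : Matrix r n (Quaternion ℝ))
    (C₀ : Matrix m l (Quaternion ℝ)) (D₀ : Matrix s n (Quaternion ℝ))
    (E₀ : Matrix m n (Quaternion ℝ))
    (hA₀ : A₀ = (1 - A * Ad) * C) (hB₀ : B₀ = D * (1 - Bd * B))
    (hC₀ : C₀ = (1 - A * Ad) * F) (hD₀ : D₀ = G * (1 - Bd * B))
    (hE₀ : E₀ = (1 - A * Ad) * E * (1 - Bd * B))
    (A₀d : Matrix p m (Quaternion ℝ)) (B₀d : Matrix n r (Quaternion ℝ))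
    (C₀d : Matrix l m (Quaternion ℝ)) (D₀d : Matrix n s (Quaternion ℝ))
    (hA₀d : IsMP A₀ A₀d) (hB₀d : IsMP B₀ B₀d)
    (hC₀d : IsMP C₀ C₀d) (hD₀d : IsMP D₀ D₀d)
    (M : Matrix m l (Quaternion ℝ)) (N : Matrix s n (Quaternion ℝ))
    (hM : M = (1 - A₀ * A₀d) * C₀) (hN : N = D₀ * (1 - B₀d * B₀))
    (Md : Matrix l m (Quaternion ℝ)) (Nd : Matrix n s (Quaternion ℝ))
    (hMd : IsMP M Md) (hNd : IsMP N Nd)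
    (S : Matrix m l (Quaternion ℝ)) (hS : S = C₀ * (1 - Md * M))
    (Sd : Matrix l m (Quaternion ℝ)) (hSd : IsMP S Sd)
    (h1 : (1 - M * Md) * (1 - A₀ * A₀d) * E₀ = 0)
    (h2 : E₀ * (1 - B₀d * B₀) * (1 - Nd * N) = 0)
    (h3 : (1 - A₀ * A₀d) * E₀ * (1 - D₀d * D₀) = 0)
    (h4 : (1 - C₀ * C₀d) * E₀ * (1 - B₀d * B₀) = 0) :
    ∀ (T₁ : Matrix k o (Quaternion ℝ)) (T₂ : Matrix k n (Quaternion ℝ))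
      (T₃ : Matrix m o (Quaternion ℝ)) (T₄ : Matrix l s (Quaternion ℝ))
      (T₅ T₆ : Matrix p r (Quaternion ℝ)) (T₇ T₈ : Matrix l s (Quaternion ℝ))
      (X : Matrix k n (Quaternion ℝ)) (Y : Matrix m o (Quaternion ℝ))
      (Z : Matrix p r (Quaternion ℝ)) (W : Matrix l s (Quaternion ℝ)),
      Z = A₀d * E₀ * B₀d - A₀d * C₀ * Md * E₀ * B₀d
          - A₀d * S * C₀d * E₀ * Nd * D₀ * B₀d
          - A₀d * S * T₄ * (1 - N * Nd) * D₀ * B₀d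
          + (1 - A₀d * A₀) * T₅ + T₆ * (1 - B₀ * B₀d) →
      W = Md * E₀ * D₀d + Sd * S * C₀d * E₀ * Nd
          + (1 - Md * M) * (1 - Sd * S) * T₇
          + (1 - Md * M) * T₄ * (1 - N * Nd) + T₈ * (1 - D₀ * D₀d) →
      X = Ad * (E - C * Z * D - F * W * G) - T₁ * B + (1 - Ad * A) * T₂ →
      Y = (1 - A * Ad) * (E - C * Z * D - F * W * G) * Bd + A * T₁ + T₃ * (1 - B * Bd) →
      A * X + Y * B + C * Z * D + F * W * G = E :=
  four_term_solution_formula_general A B C D F G E Ad Bd hA hB A₀ B₀ C₀ D₀ E₀ hA₀ hB₀ hC₀ hD₀ hE₀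
    A₀d B₀d C₀d D₀d hA₀d hB₀d hD₀d M N hM hN Md Nd hMd hNd S hS Sd hSd h1 h2 h3 h4
end
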